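/- The iterative Metropolized Gibbs kernel dominates the Metropolized Gibbs kernel in the Peskun order: for all i ≠ j, P^{IMG}_{ij} ≥ P^{MG}_{ij}. -/

import Mathlib

/-- `imgS w j = ∑_{k < j} y_k`, the partial sums of the `y`-sequence of the
iterative Metropolized Gibbs sampler built from the (`0`-indexed) weight
sequence `w`. -/
noncomputable def imgS (w : ℕ → ℝ) : ℕ → ℝ
  | 0 => 0
  | j + 1 =>
      imgS w j +
        (if j = 0 then w 0 / (1 - w 0)
         else w j * (1 - imgS w j) / (1 - ∑ k ∈ Finset.range (j + 1), w k))

/-- The `y`-sequence of the iterative Metropolized Gibbs sampler: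
`y 0 = w 0 / (1 - w 0)` and, for `j > 0`,
`y j = w j * (1 - ∑_{k < j} y k) / (1 - ∑_{k ≤ j} w k)`. -/
noncomputable def imgY (w : ℕ → ℝ) (j : ℕ) : ℝ :=
  if j = 0 then w 0 / (1 - w 0)
  else w j * (1 - imgS w j) / (1 - ∑ k ∈ Finset.range (j + 1), w k)

/-- The iterative Metropolized Gibbs kernel: `PIMG π i j` is the transition
probability from state `j` to state `i` (states `0`-indexed, ordered by
increasing weight).  `PIMG π i j = y i` for `i < j`, `(π i / π j) * y j` for
`i > j`, `1 - ∑_{k < n - 1} y k` at the last diagonal entry, and `0` on the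
remaining diagonal entries. -/
noncomputable def PIMG {n : ℕ} (π : Fin n → ℝ) (i j : Fin n) : ℝ :=
  let w : ℕ → ℝ := fun k => if h : k < n then π ⟨k, h⟩ else 0
  if (i : ℕ) < (j : ℕ) then imgY w i
  else if (j : ℕ) < (i : ℕ) then (π i / π j) * imgY w j
  else if (i : ℕ) = n - 1 then 1 - ∑ k ∈ Finset.range (n - 1), imgY w k
  else 0

/-- The Metropolized Gibbs kernel: off-diagonal transition probability from
state `j` to state `i`. -/
noncomputable def PMG {n : ℕ} (π : Fin n → ℝ) (i j : Fin n) : ℝ :=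
  min (π i / (1 - π j)) (π i / (1 - π i))

/-! Write `D_j = 1 - ∑_{k ≤ j} w_k` for the weight beyond state `j`. For increasing weights the
invariant `D_j ≤ (1 - ∑_{k < j} y_k) (1 - w_j)` propagates, because one step of the recursion
reduces it to `(w_{j+1} - w_j) (1 - D_j) ≥ 0`; and since `y_j = w_j (1 - ∑_{k < j} y_k) / D_j`,
the invariant says exactly `y_j ≥ w_j / (1 - w_j)`. This bounds the entries above the diagonal
by the second argument of the minimum in `PMG`. The entries below the diagonal are `π_i / π_j`
times these, and `π_i / π_j · π_j / (1 - π_j)` is its first argument. -/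

/-- One step of the invariant, with `a = 1 - ∑_{k < j} y_k`, `D = D_j`, `p = w_j` and
`q = w_{j+1}`. -/
theorem sub_le_mul_one_sub_div_mul {a D p q : ℝ} (hD : 0 < D) (hp : 0 ≤ p) (hpq : p ≤ q)
    (hqD : q ≤ D) (hpD : p + D ≤ 1) (h : D ≤ a * (1 - p)) :
    D - q ≤ a * (1 - p / D) * (1 - q) := by
  have hswap : (D - q) * (1 - p) ≤ (D - p) * (1 - q) := by
    linarith [mul_nonneg (sub_nonneg.2 hpq) (by linarith : (0 : ℝ) ≤ 1 - D)]
  have key : D * (D - q) * (1 - p) ≤ a * (D - p) * (1 - q) * (1 - p) :=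
    calc D * (D - q) * (1 - p) ≤ D * ((D - p) * (1 - q)) := by
          rw [mul_assoc]; exact mul_le_mul_of_nonneg_left hswap hD.le
      _ ≤ a * (1 - p) * ((D - p) * (1 - q)) :=
          mul_le_mul_of_nonneg_right h (mul_nonneg (by linarith) (by linarith))
      _ = a * (D - p) * (1 - q) * (1 - p) := by ring
  rw [one_sub_div hD.ne', mul_div_assoc', div_mul_eq_mul_div, le_div_iff₀ hD, mul_comm]
  exact le_of_mul_le_mul_right key (by linarith)

section
open Finset
variable {n : ℕ} {w : ℕ → ℝ}

theorem imgY_eq (j : ℕ) :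
    imgY w j = w j * (1 - imgS w j) / (1 - ∑ k ∈ range (j + 1), w k) := by
  cases j <;> simp [imgY, imgS]

theorem imgS_succ (j : ℕ) : imgS w (j + 1) = imgS w j + imgY w j := by
  cases j <;> rfl

theorem one_sub_imgS_succ (j : ℕ) :
    1 - imgS w (j + 1) =
      (1 - imgS w j) * (1 - w j / (1 - ∑ k ∈ range (j + 1), w k)) := by
  rw [imgS_succ, imgY_eq]
  ring

theorem le_sum_range_succ (hpos : ∀ k < n, 0 < w k) {j : ℕ} (hj : j < n) :
    w j ≤ ∑ k ∈ range (j + 1), w k :=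
  single_le_sum (fun k hk => (hpos k ((mem_range.1 hk).trans_le hj)).le) (self_mem_range_succ j)

theorem le_one_sub_sum_range (hpos : ∀ k < n, 0 < w k) (hsum : ∑ k ∈ range n, w k = 1)
    {j : ℕ} (hj : j + 1 < n) : w (j + 1) ≤ 1 - ∑ k ∈ range (j + 1), w k := by
  have htail : w (j + 1) ≤ ∑ k ∈ Ico (j + 1) n, w k :=
    single_le_sum (fun k hk => (hpos k (mem_Ico.1 hk).2).le) (mem_Ico.2 ⟨le_rfl, hj⟩)
  linarith [sum_range_add_sum_Ico w hj.le]

theorem one_sub_sum_range_le_one_sub_imgS_mul (hpos : ∀ k < n, 0 < w k)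
    (hmono : ∀ k, k + 1 < n → w k ≤ w (k + 1)) (hsum : ∑ k ∈ range n, w k = 1) :
    ∀ j < n, 1 - ∑ k ∈ range (j + 1), w k ≤ (1 - imgS w j) * (1 - w j)
  | 0, _ => by simp [imgS]
  | m + 1, hm => by
    have hq := le_one_sub_sum_range hpos hsum hm
    have hp := le_sum_range_succ hpos (j := m) (by omega)
    rw [sum_range_succ, ← sub_sub, one_sub_imgS_succ]
    exact sub_le_mul_one_sub_div_mul ((hpos (m + 1) hm).trans_le hq) (hpos m (by omega)).le
      (hmono m hm) hq (by linarith)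
        (one_sub_sum_range_le_one_sub_imgS_mul hpos hmono hsum m (by omega))

theorem div_one_sub_le_imgY (hpos : ∀ k < n, 0 < w k)
    (hmono : ∀ k, k + 1 < n → w k ≤ w (k + 1)) (hsum : ∑ k ∈ range n, w k = 1) {j : ℕ}
    (hj : j + 1 < n) : w j / (1 - w j) ≤ imgY w j := by
  have hinv := one_sub_sum_range_le_one_sub_imgS_mul hpos hmono hsum j (by omega)
  have hD := (hpos (j + 1) hj).trans_le (le_one_sub_sum_range hpos hsum hj)
  have hw : 0 < 1 - w j := by linarith [le_sum_range_succ hpos (j := j) (by omega)]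
  rw [imgY_eq, div_le_div_iff₀ hw hD, mul_assoc]
  exact mul_le_mul_of_nonneg_left hinv (hpos j (by omega)).le
end

theorem PIMG_dominates_PMG_general {n : ℕ} (π : Fin n → ℝ)
    (hpos : ∀ i, 0 < π i) (hsum : ∑ i, π i = 1) (hmono : Monotone π) :
    ∀ i j, i ≠ j → PMG π i j ≤ PIMG π i j := by
  intro i j hij
  set w : ℕ → ℝ := fun k => if h : k < n then π ⟨k, h⟩ else 0 with hw
  have hwπ : ∀ k : Fin n, w k = π k := fun k => dif_pos k.isLt
  have hY : ∀ k : Fin n, (k : ℕ) + 1 < n → π k / (1 - π k) ≤ imgY w k := fun k hk =>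
    hwπ k ▸ div_one_sub_le_imgY (fun m hm => hwπ ⟨m, hm⟩ ▸ hpos _)
      (fun m hm => hwπ ⟨m, by omega⟩ ▸ hwπ ⟨m + 1, hm⟩ ▸ hmono (Nat.le_succ m))
      (by rw [← Fin.sum_univ_eq_sum_range, ← hsum]; exact Fintype.sum_congr _ _ hwπ) hk
  simp only [PMG, PIMG, ← hw]
  rcases lt_trichotomy (i : ℕ) j with h | h | h
  · rw [if_pos h]
    exact (min_le_right _ _).trans (hY i (by omega))
  · exact absurd (Fin.ext h) hij
  · rw [if_neg (by omega), if_pos h]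
    calc min (π i / (1 - π j)) (π i / (1 - π i)) ≤ π i / (1 - π j) := min_le_left _ _
      _ = π i / π j * (π j / (1 - π j)) := (div_mul_div_cancel₀ (hpos j).ne').symm
      _ ≤ π i / π j * imgY w j :=
          mul_le_mul_of_nonneg_left (hY j (by omega)) (div_pos (hpos i) (hpos j)).le

/-- the iterative Metropolized Gibbs kernel dominates the
Metropolized Gibbs kernel in the Peskun order: `PIMG i j ≥ PMG i j` for all
`i ≠ j`. -/
theorem PIMG_dominates_PMG {n : ℕ} (hn : 2 ≤ n) (π : Fin n → ℝ)
    (hpos : ∀ i, 0 < π i) (hsum : ∑ i, π i = 1) (hmono : Monotone π)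
    (hlt : ∀ i, π i < 1) :
    ∀ i j, i ≠ j → PMG π i j ≤ PIMG π i j :=
  PIMG_dominates_PMG_general π hpos hsum hmono
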